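/- Let m ∈ ℕ, let L : (ℂ²)^{⊗2m} →ₗ[ℂ] ℂ be a linear functional, and define ⟨H⟩ : ℝ^m → ℂ by ⟨H⟩(θ₁,…,θ_m) = L(⊗_{l=1}^m u(θ_l)), where u(θ) = (e₀ + exp(iθ)·e₁) ⊗ (e₀ + exp(−iθ)·e₁) ∈ ℂ² ⊗ ℂ². Then for every j ∈ {1,…,m}, the expectation of the partial derivative over parameters distributed independently and uniformly on [−π,π] vanishes: (1/(2π)^m) · ∫_{[−π,π]^m} (∂⟨H⟩/∂θ_j)(θ) dθ = 0. -/

import Mathlib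

open MeasureTheory
open scoped TensorProduct

noncomputable section

/-- `ℂ²` with standard basis vectors. -/
abbrev C2 : Type := ℂ × ℂ

def e0 : C2 := (1, 0)
def e1 : C2 := (0, 1)

/-- The pair of tensor factors carrying the parameter `θ`:
`u(θ) = (e₀ + exp(iθ)·e₁) ⊗ (e₀ + exp(−iθ)·e₁)`. -/
def u (θ : ℝ) : C2 ⊗[ℂ] C2 :=
  (e0 + Complex.exp (Complex.I * (θ : ℂ)) • e1) ⊗ₜ[ℂ]
    (e0 + Complex.exp (-(Complex.I * (θ : ℂ))) • e1)

/-! Expanding each factor `u(θ_l)` in the tensors `e₀⊗e₀ + e₁⊗e₁`, `e₁⊗e₀`, `e₀⊗e₁`, with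
coefficients `1`, `exp(iθ_l)`, `exp(-iθ_l)`, shows that `⟨H⟩` is a trigonometric polynomial.
The `θ_j`-derivative of a monomial `∏ₗ exp(i nₗ θₗ)` is `i n_j` times the monomial, and its
integral over the box `[-π, π]^m` factorises; the `j`-th factor `∫ exp(i n_j t) dt` vanishes
unless `n_j = 0`, in which case the prefactor `n_j` does. -/

open Complex Function
open scoped Real

theorem setIntegral_Icc_pi_prod {ι 𝕜 : Type*} [Fintype ι] [RCLike 𝕜] (a b : ι → ℝ)
    (f : ι → ℝ → 𝕜) :
    ∫ x in Set.Icc a b, ∏ i, f i (x i) = ∏ i, ∫ t in Set.Icc (a i) (b i), f i t := by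
  rw [← Set.pi_univ_Icc, volume_pi, Measure.restrict_pi_pi, integral_fintype_prod_eq_prod]

theorem setIntegral_exp_I_mul_intCast_eq_zero {n : ℤ} (hn : n ≠ 0) :
    ∫ t in Set.Icc (-π) π, exp (I * n * t) = 0 := by
  have hperiod : exp (I * n * π) = exp (I * n * ↑(-π)) :=
    exp_eq_exp_iff_exists_int.2 ⟨n, by push_cast; ring⟩
  rw [integral_Icc_eq_integral_Ioc, ← intervalIntegral.integral_of_le (by linarith [Real.pi_pos]),
    integral_exp_mul_complex (by simp [hn, I_ne_zero]), hperiod, sub_self, zero_div]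

section TrigPolynomial

variable {ι : Type*} [Fintype ι]

def trigMonomial (n : ι → ℤ) (θ : ι → ℝ) : ℂ :=
  ∏ i, exp (I * n i * θ i)

def trigPolynomial {σ : Type*} [Fintype σ] (ν : σ → ι → ℤ) (a : σ → ℂ) (θ : ι → ℝ) : ℂ :=
  ∑ s, a s * trigMonomial (ν s) θ

@[fun_prop]
theorem continuous_trigMonomial (n : ι → ℤ) : Continuous (trigMonomial n) := by
  unfold trigMonomial; fun_prop

theorem hasDerivAt_trigMonomial_update [DecidableEq ι] (n : ι → ℤ) (θ : ι → ℝ) (j : ι) :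
    HasDerivAt (fun t => trigMonomial n (update θ j t)) (I * n j * trigMonomial n θ) (θ j) := by
  have hsplit : ∀ t, trigMonomial n (update θ j t) =
      exp (I * n j * t) * ∏ i ∈ Finset.univ.erase j, exp (I * n i * θ i) := fun t => by
    simp only [trigMonomial, apply_update (fun i (x : ℝ) => exp (I * n i * x)),
      Finset.prod_update_of_mem (Finset.mem_univ j), Finset.sdiff_singleton_eq_erase]
  have hexp : HasDerivAt (fun t : ℝ => exp (I * n j * t)) (exp (I * n j * θ j) * (I * n j))
      (θ j) := by
    simpa using ((hasDerivAt_id (θ j : ℂ)).const_mul (I * n j)).cexp.comp_ofReal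
  refine HasDerivAt.congr_of_eventuallyEq ?_ (Filter.Eventually.of_forall hsplit)
  refine (hexp.mul_const _).congr_deriv ?_
  have hθ := hsplit (θ j)
  rw [update_eq_self] at hθ
  rw [hθ]
  ring

theorem intCast_mul_setIntegral_trigMonomial_eq_zero (n : ι → ℤ) (j : ι) :
    (n j : ℂ) * ∫ θ in Set.Icc (fun _ => -π) (fun _ => π), trigMonomial n θ = 0 := by
  rcases eq_or_ne (n j) 0 with h | h
  · simp [h]
  · simp only [trigMonomial]
    rw [setIntegral_Icc_pi_prod _ _ fun i t => exp (I * n i * t),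
      Finset.prod_eq_zero (Finset.mem_univ j) (setIntegral_exp_I_mul_intCast_eq_zero h), mul_zero]

theorem setIntegral_deriv_update_trigPolynomial_eq_zero [DecidableEq ι] {σ : Type*} [Fintype σ]
    (ν : σ → ι → ℤ) (a : σ → ℂ) (j : ι) :
    ∫ θ in Set.Icc (fun _ => -π) (fun _ => π),
      deriv (fun t => trigPolynomial ν a (update θ j t)) (θ j) = 0 := by
  have hderiv : ∀ θ, deriv (fun t => trigPolynomial ν a (update θ j t)) (θ j) =
      ∑ s, a s * I * (ν s j * trigMonomial (ν s) θ) := fun θ => by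
    refine (HasDerivAt.fun_sum fun s _ =>
      (hasDerivAt_trigMonomial_update (ν s) θ j).const_mul (a s)).deriv.trans ?_
    simp only [mul_assoc]
  have hint : ∀ s, IntegrableOn (fun θ => a s * I * (ν s j * trigMonomial (ν s) θ))
      (Set.Icc (fun _ => -π) (fun _ => π)) := fun s =>
    (by fun_prop : Continuous _).integrableOn_Icc
  simp_rw [hderiv]
  rw [integral_finsetSum _ fun s _ => hint s]
  refine Finset.sum_eq_zero fun s _ => ?_
  rw [integral_const_mul, integral_const_mul, intCast_mul_setIntegral_trigMonomial_eq_zero,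
    mul_zero]

end TrigPolynomial

theorem map_tprod_sum_smul {R M N ι κ : Type*} [CommSemiring R] [AddCommMonoid M] [Module R M]
    [AddCommMonoid N] [Module R N] [Fintype ι] [DecidableEq ι] [Fintype κ]
    (L : (⨂[R] _ : ι, M) →ₗ[R] N) (c : ι → κ → R) (w : κ → M) :
    L (⨂ₜ[R] i, ∑ k, c i k • w k) = ∑ s : ι → κ, (∏ i, c i (s i)) • L (⨂ₜ[R] i, w (s i)) := by
  simp only [MultilinearMap.map_sum, map_sum, MultilinearMap.map_smul_univ, map_smul]

def uFreq : Fin 3 → ℤ := ![0, 1, -1]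

def uTensor : Fin 3 → C2 ⊗[ℂ] C2 := ![e0 ⊗ₜ[ℂ] e0 + e1 ⊗ₜ[ℂ] e1, e1 ⊗ₜ[ℂ] e0, e0 ⊗ₜ[ℂ] e1]

theorem u_eq_sum (θ : ℝ) : u θ = ∑ k, exp (I * uFreq k * θ) • uTensor k := by
  have hinv : exp (-(I * θ)) * exp (I * θ) = 1 := by rw [← exp_add]; simp
  simp only [u, uFreq, uTensor, Fin.sum_univ_three, TensorProduct.tmul_add,
    TensorProduct.add_tmul, TensorProduct.tmul_smul, TensorProduct.smul_tmul', smul_add,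
    smul_smul, hinv, one_smul, Matrix.cons_val_zero, Matrix.cons_val_one, Matrix.cons_val,
    Int.cast_zero, Int.cast_one, Int.cast_neg, mul_zero, zero_mul, exp_zero, mul_one, mul_neg,
    neg_mul]
  abel

/-- the expectation over uniformly distributed parameters of the
partial derivative of a circuit expectation vanishes. -/
theorem expectation_of_gradient_eq_zero (m : ℕ)
    (L : (⨂[ℂ] _ : Fin m, C2 ⊗[ℂ] C2) →ₗ[ℂ] ℂ)
    (H : (Fin m → ℝ) → ℂ)
    (hH : ∀ θ, H θ = L (⨂ₜ[ℂ] l, u (θ l)))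
    (j : Fin m) :
    (1 / (2 * Real.pi) ^ m : ℂ) *
      (∫ θ in Set.Icc (fun _ : Fin m => -Real.pi) (fun _ => Real.pi),
        deriv (fun t => H (Function.update θ j t)) (θ j)) = 0 := by
  have hpoly : H = trigPolynomial (fun s l => uFreq (s l))
      fun s : Fin m → Fin 3 => L (⨂ₜ[ℂ] l, uTensor (s l)) := by
    funext θ
    simp only [hH, u_eq_sum, map_tprod_sum_smul, trigPolynomial, trigMonomial, smul_eq_mul,
      mul_comm]
  rw [hpoly, setIntegral_deriv_update_trigPolynomial_eq_zero, mul_zero]
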